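/- arXiv:1808.01689 — 3 statements merged into one kernel-verified Lean document; each statement's English description precedes it below -/
import Mathlib

section
/- The vector fields e = ∂/∂t₁, h = -2t₁∂/∂t₁ - 4t₂∂/∂t₂ - 6t₃∂/∂t₃, and f = -(t₁² - t₂/12)∂/∂t₁ - (4t₁t₂ - 6t₃)∂/∂t₂ - (6t₁t₃ - t₂²/3)∂/∂t₃ on ℂ³ satisfy the sl₂ commutation relations [h,e] = 2e, [h,f] = -2f, [e,f] = h. -/
open MvPolynomial

/-- The derivation `e = ∂/∂t₁` on ℂ[t₁,t₂,t₃]. -/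
noncomputable def eD : Derivation ℂ (MvPolynomial (Fin 3) ℂ) (MvPolynomial (Fin 3) ℂ) :=
  mkDerivation ℂ ![1, 0, 0]

/-- The derivation `h = -2t₁∂/∂t₁ - 4t₂∂/∂t₂ - 6t₃∂/∂t₃`. -/
noncomputable def hD : Derivation ℂ (MvPolynomial (Fin 3) ℂ) (MvPolynomial (Fin 3) ℂ) :=
  mkDerivation ℂ ![-2 * X 0, -4 * X 1, -6 * X 2]

/-- The derivation
`f = -(t₁² - t₂/12)∂/∂t₁ - (4t₁t₂ - 6t₃)∂/∂t₂ - (6t₁t₃ - t₂²/3)∂/∂t₃`. -/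
noncomputable def fD : Derivation ℂ (MvPolynomial (Fin 3) ℂ) (MvPolynomial (Fin 3) ℂ) :=
  mkDerivation ℂ ![-(X 0 ^ 2 - C (1/12 : ℂ) * X 1), -(4 * X 0 * X 1 - 6 * X 2),
    -(6 * X 0 * X 2 - C (1/3 : ℂ) * X 1 ^ 2)]

/-! The bracket of two derivations is again a derivation, and a derivation of a polynomial ring
is determined by its values on the variables; so each relation only has to be checked on
`t₁, t₂, t₃`, where it is an identity between explicit polynomials. -/

@[simp]
theorem Derivation.map_ofNat {R A M : Type*} [CommSemiring R] [CommSemiring A] [AddCommMonoid M]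
    [Algebra R A] [Module A M] [Module R M] (D : Derivation R A M) (n : ℕ) [n.AtLeastTwo] :
    D (ofNat(n) : A) = 0 :=
  D.map_natCast n

theorem MvPolynomial.commutator_mkDerivation_X {R σ : Type*} [CommRing R]
    (f g : σ → MvPolynomial σ R) (i : σ) :
    ⁅mkDerivation R f, mkDerivation R g⁆ (X i) =
      mkDerivation R f (g i) - mkDerivation R g (f i) := by
  rw [Derivation.commutator_apply, mkDerivation_X, mkDerivation_X]

theorem commutator_hD_eD : ⁅hD, eD⁆ = (2 : ℂ) • eD :=
  derivation_ext fun i => by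
    fin_cases i <;> simp [hD, eD, commutator_mkDerivation_X, smul_eq_C_mul, map_ofNat]

theorem commutator_hD_fD : ⁅hD, fD⁆ = (-2 : ℂ) • fD :=
  derivation_ext fun i => by
    fin_cases i <;> simp [hD, fD, commutator_mkDerivation_X, smul_eq_C_mul, map_ofNat] <;> ring

theorem commutator_eD_fD : ⁅eD, fD⁆ = hD :=
  derivation_ext fun i => by
    fin_cases i <;> simp [hD, eD, fD, commutator_mkDerivation_X] <;> ring

/-- The vector fields `e`, `h`, `f` on ℂ³ satisfy the sl₂ commutation relations
`[h,e] = 2e`, `[h,f] = -2f`, `[e,f] = h`, where the bracket of derivations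
`D₁, D₂` is `D₁∘D₂ - D₂∘D₁`. -/
theorem sl2_relations (p : MvPolynomial (Fin 3) ℂ) :
    hD (eD p) - eD (hD p) = 2 * eD p ∧
    hD (fD p) - fD (hD p) = -2 * fD p ∧
    eD (fD p) - fD (eD p) = hD p := by
  simp only [← Derivation.commutator_apply, commutator_hD_eD, commutator_hD_fD, commutator_eD_fD,
    Derivation.smul_apply, smul_eq_C_mul, map_ofNat, map_neg, and_self]
end

section
/- If (φ₁, φ₂, φ₃) is a solution of the Ramanujan differential equation φ₁' = φ₁² - (1/12)φ₂, φ₂' = 4φ₁φ₂ - 6φ₃, φ₃' = 6φ₁φ₃ - (1/3)φ₂² on a domain of the upper half plane, then for every A ∈ SL(2,ℂ) the triple (φ₁|₂¹A, φ₂|₄⁰A, φ₃|₆⁰A) is also a solution of the same differential equation (Halphen property). -/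
/-- Slash operator `f|ₘ⁰A (τ) = (cτ+d)⁻ᵐ f((aτ+b)/(cτ+d))` for `A = [[a,b],[c,d]]`. -/
noncomputable def slash0 (m : ℕ) (A : Matrix (Fin 2) (Fin 2) ℂ) (f : ℂ → ℂ) : ℂ → ℂ :=
  fun τ => ((A 1 0 * τ + A 1 1) ^ m)⁻¹ * f ((A 0 0 * τ + A 0 1) / (A 1 0 * τ + A 1 1))

/-- Slash operator `f|ₘ¹A (τ) = (cτ+d)⁻ᵐ f(Aτ) - c(cτ+d)⁻¹`. -/
noncomputable def slash1 (m : ℕ) (A : Matrix (Fin 2) (Fin 2) ℂ) (f : ℂ → ℂ) : ℂ → ℂ :=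
  fun τ => ((A 1 0 * τ + A 1 1) ^ m)⁻¹ * f ((A 0 0 * τ + A 0 1) / (A 1 0 * τ + A 1 1))
    - A 1 0 * (A 1 0 * τ + A 1 1)⁻¹

/-!
With `j = (cτ+d)⁻¹` and `det A = 1`, the chain rule gives
`(f|ₘ⁰A)' = j^(m+2) f'(Aτ) - m c j · f|ₘ⁰A`, while the correction `-c j` in `|₂¹` has
derivative `c² j²`. Each right-hand side of the Ramanujan system has weight `m + 2` when the
unknown on the left has weight `m`, and its part linear in `φ₁` is `m φ₁ · (that unknown)`
(for `φ₁` itself, `φ₁²`). Substituting `φ₁|₂¹A = j² φ₁(Aτ) - c j`, the `-c j` therefore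
produces exactly the term `-m c j · f|ₘ⁰A`, and in `φ₁²` its square matches `c² j²`.
-/

section SlashDeriv

variable {A : Matrix (Fin 2) (Fin 2) ℂ} {τ : ℂ}

theorem hasDerivAt_affine (a b : ℂ) : HasDerivAt (fun t => a * t + b) a τ := by
  simpa using ((hasDerivAt_id τ).const_mul a).add_const b

theorem hasDerivAt_mobius (hden : A 1 0 * τ + A 1 1 ≠ 0) :
    HasDerivAt (fun t => (A 0 0 * t + A 0 1) / (A 1 0 * t + A 1 1))
      (A.det / (A 1 0 * τ + A 1 1) ^ 2) τ := by
  refine ((hasDerivAt_affine _ _).div (hasDerivAt_affine _ _) hden).congr_deriv ?_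
  rw [Matrix.det_fin_two]
  ring

theorem hasDerivAt_inv_linear_pow (c d : ℂ) (m : ℕ) (hden : c * τ + d ≠ 0) :
    HasDerivAt (fun t => ((c * t + d) ^ m)⁻¹) (-(m * c) * (c * τ + d)⁻¹ ^ (m + 1)) τ := by
  simp only [← inv_pow]
  refine (((hasDerivAt_affine c d).inv hden).pow m).congr_deriv ?_
  rcases m with _ | m
  · simp
  · simp only [Pi.inv_apply, Nat.add_sub_cancel, Nat.cast_succ]
    generalize c * τ + d = x
    ring

variable {f : ℂ → ℂ} {f' : ℂ}

theorem hasDerivAt_slash0 (m : ℕ) (hA : A.det = 1) (hden : A 1 0 * τ + A 1 1 ≠ 0)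
    (hf : HasDerivAt f f' ((A 0 0 * τ + A 0 1) / (A 1 0 * τ + A 1 1))) :
    HasDerivAt (slash0 m A f)
      (((A 1 0 * τ + A 1 1) ^ (m + 2))⁻¹ * f'
        - m * A 1 0 * (A 1 0 * τ + A 1 1)⁻¹ * slash0 m A f τ) τ := by
  have hcomp := hf.comp τ (hasDerivAt_mobius hden)
  refine ((hasDerivAt_inv_linear_pow _ _ m hden).mul hcomp).congr_deriv ?_
  simp only [slash0, hA, Function.comp_apply, one_div, ← inv_pow]
  generalize A 1 0 * τ + A 1 1 = x
  ring

theorem hasDerivAt_slash1 (m : ℕ) (hA : A.det = 1) (hden : A 1 0 * τ + A 1 1 ≠ 0)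
    (hf : HasDerivAt f f' ((A 0 0 * τ + A 0 1) / (A 1 0 * τ + A 1 1))) :
    HasDerivAt (slash1 m A f)
      (((A 1 0 * τ + A 1 1) ^ (m + 2))⁻¹ * f'
        - m * A 1 0 * (A 1 0 * τ + A 1 1)⁻¹ * slash0 m A f τ
        + A 1 0 ^ 2 * (A 1 0 * τ + A 1 1)⁻¹ ^ 2) τ := by
  have hsplit : slash1 m A f = slash0 m A f - fun t => A 1 0 * ((A 1 0 * t + A 1 1) ^ 1)⁻¹ := by
    funext t
    simp only [slash1, slash0, Pi.sub_apply, pow_one]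
  have hcorr := (hasDerivAt_inv_linear_pow (A 1 0) (A 1 1) 1 hden).const_mul (A 1 0)
  rw [hsplit]
  refine ((hasDerivAt_slash0 m hA hden hf).sub hcorr).congr_deriv ?_
  simp only [Nat.cast_one]
  generalize A 1 0 * τ + A 1 1 = x
  ring

end SlashDeriv

theorem halphen_property_general (U : Set ℂ)
    (φ₁ φ₂ φ₃ : ℂ → ℂ)
    (hsol : ∀ τ ∈ U,
      HasDerivAt φ₁ (φ₁ τ ^ 2 - φ₂ τ / 12) τ ∧
      HasDerivAt φ₂ (4 * φ₁ τ * φ₂ τ - 6 * φ₃ τ) τ ∧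
      HasDerivAt φ₃ (6 * φ₁ τ * φ₃ τ - φ₂ τ ^ 2 / 3) τ)
    (A : Matrix (Fin 2) (Fin 2) ℂ) (hA : A.det = 1) (τ : ℂ)
    (hmem : (A 0 0 * τ + A 0 1) / (A 1 0 * τ + A 1 1) ∈ U)
    (hden : A 1 0 * τ + A 1 1 ≠ 0) :
    HasDerivAt (slash1 2 A φ₁)
      (slash1 2 A φ₁ τ ^ 2 - slash0 4 A φ₂ τ / 12) τ ∧
    HasDerivAt (slash0 4 A φ₂)
      (4 * slash1 2 A φ₁ τ * slash0 4 A φ₂ τ - 6 * slash0 6 A φ₃ τ) τ ∧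
    HasDerivAt (slash0 6 A φ₃)
      (6 * slash1 2 A φ₁ τ * slash0 6 A φ₃ τ - slash0 4 A φ₂ τ ^ 2 / 3) τ := by
  obtain ⟨h₁, h₂, h₃⟩ := hsol _ hmem
  refine ⟨(hasDerivAt_slash1 2 hA hden h₁).congr_deriv ?_,
    (hasDerivAt_slash0 4 hA hden h₂).congr_deriv ?_,
    (hasDerivAt_slash0 6 hA hden h₃).congr_deriv ?_⟩ <;>
  · simp only [slash0, slash1, ← inv_pow]
    generalize A 1 0 * τ + A 1 1 = x
    ring

/-- Halphen property: if `(φ₁,φ₂,φ₃)` solves the Ramanujan differential equation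
`φ₁' = φ₁² - φ₂/12`, `φ₂' = 4φ₁φ₂ - 6φ₃`, `φ₃' = 6φ₁φ₃ - φ₂²/3` on a domain `U` of the
upper half plane, then for every `A ∈ SL(2,ℂ)` the triple `(φ₁|₂¹A, φ₂|₄⁰A, φ₃|₆⁰A)`
solves the same equation (at every point whose image under `A` lies in `U`). -/
theorem halphen_property (U : Set ℂ) (hU : U ⊆ {z : ℂ | 0 < z.im})
    (φ₁ φ₂ φ₃ : ℂ → ℂ)
    (hsol : ∀ τ ∈ U,
      HasDerivAt φ₁ (φ₁ τ ^ 2 - φ₂ τ / 12) τ ∧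
      HasDerivAt φ₂ (4 * φ₁ τ * φ₂ τ - 6 * φ₃ τ) τ ∧
      HasDerivAt φ₃ (6 * φ₁ τ * φ₃ τ - φ₂ τ ^ 2 / 3) τ)
    (A : Matrix (Fin 2) (Fin 2) ℂ) (hA : A.det = 1) (τ : ℂ)
    (hmem : (A 0 0 * τ + A 0 1) / (A 1 0 * τ + A 1 1) ∈ U)
    (hden : A 1 0 * τ + A 1 1 ≠ 0) :
    HasDerivAt (slash1 2 A φ₁)
      (slash1 2 A φ₁ τ ^ 2 - slash0 4 A φ₂ τ / 12) τ ∧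
    HasDerivAt (slash0 4 A φ₂)
      (4 * slash1 2 A φ₁ τ * slash0 4 A φ₂ τ - 6 * slash0 6 A φ₃ τ) τ ∧
    HasDerivAt (slash0 6 A φ₃)
      (6 * slash1 2 A φ₁ τ * slash0 6 A φ₃ τ - slash0 4 A φ₂ τ ^ 2 / 3) τ :=
  halphen_property_general U φ₁ φ₂ φ₃ hsol A hA τ hmem hden
end

section
/- Every matrix A in SL(2,ℝ) with the property that the double coset SL(2,ℤ)·A·SL(2,ℤ) consists of finitely many left SL(2,ℤ)-cosets is, up to multiplication by a nonzero real scalar, a matrix with rational entries. -/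
/-!
If `Γ A Γ` is covered by finitely many cosets `Γ N`, then for every `γ ∈ Γ` two of the matrices
`A γ^m`, `A γ^n` (`m < n`) lie in the same coset, so `A γ^(n-m) A⁻¹ ∈ Γ`. For a unipotent
`γ = 1 + E` this power is `1 + (n-m) E`, hence `A E A⁻¹` has rational entries. Together with `1`,
the integral nilpotents `E` span `M₂(ℚ)` over `ℚ`, so conjugation by `A` maps every matrix unit
`E_ij` to a rational matrix. Its entries are the products `A k i * A⁻¹ j l`, so any nonzero entry of
`A⁻¹` is a scalar making `A` rational.
-/

/-- `SL(2,ℤ)` viewed as the set of real 2×2 matrices with integer entries and determinant 1. -/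
def GammaR : Set (Matrix (Fin 2) (Fin 2) ℝ) :=
  {g | (∀ i j, ∃ n : ℤ, g i j = (n : ℝ)) ∧ g.det = 1}

/-- The double coset `Γ·A·Γ`. -/
def doubleCoset (A : Matrix (Fin 2) (Fin 2) ℝ) : Set (Matrix (Fin 2) (Fin 2) ℝ) :=
  {M | ∃ g ∈ GammaR, ∃ g' ∈ GammaR, M = g * A * g'}

open Matrix

theorem Matrix.mem_range_map_iff {m n α β : Type*} (f : α → β) (M : Matrix m n β) :
    M ∈ Set.range (fun N : Matrix m n α => N.map f) ↔ ∀ i j, ∃ a, M i j = f a := by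
  refine ⟨?_, fun h => ?_⟩
  · rintro ⟨N, rfl⟩ i j
    exact ⟨N i j, rfl⟩
  · choose N hN using h
    exact ⟨of N, ext fun i j => (hN i j).symm⟩

section
variable {n : Type*} [Fintype n] [DecidableEq n]

variable (n) in
noncomputable def ratMatrices : Subalgebra ℚ (Matrix n n ℝ) := (Algebra.ofId ℚ ℝ).mapMatrix.range

variable (n) in
noncomputable def intMatrices : Subring (Matrix n n ℝ) := (Int.castRingHom ℝ).mapMatrix.range

theorem mem_ratMatrices {M : Matrix n n ℝ} : M ∈ ratMatrices n ↔ ∀ i j, ∃ q : ℚ, M i j = q :=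
  Matrix.mem_range_map_iff _ M

theorem mem_intMatrices {M : Matrix n n ℝ} : M ∈ intMatrices n ↔ ∀ i j, ∃ a : ℤ, M i j = a :=
  Matrix.mem_range_map_iff _ M

theorem mem_ratMatrices_of_mem_intMatrices {M : Matrix n n ℝ} (hM : M ∈ intMatrices n) :
    M ∈ ratMatrices n :=
  mem_ratMatrices.2 fun i j =>
    let ⟨a, ha⟩ := mem_intMatrices.1 hM i j
    ⟨a, by rw [ha, Rat.cast_intCast]⟩

theorem adjugate_mem_intMatrices {M : Matrix n n ℝ} (hM : M ∈ intMatrices n) :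
    M.adjugate ∈ intMatrices n := by
  obtain ⟨N, rfl⟩ := hM
  exact ⟨N.adjugate, RingHom.map_adjugate _ N⟩

end

theorem mem_GammaR_iff {g : Matrix (Fin 2) (Fin 2) ℝ} :
    g ∈ GammaR ↔ g ∈ intMatrices (Fin 2) ∧ g.det = 1 := by
  rw [mem_intMatrices]; rfl

theorem one_mem_GammaR : (1 : Matrix (Fin 2) (Fin 2) ℝ) ∈ GammaR :=
  mem_GammaR_iff.2 ⟨one_mem _, det_one⟩

theorem mul_mem_GammaR {g h : Matrix (Fin 2) (Fin 2) ℝ} (hg : g ∈ GammaR) (hh : h ∈ GammaR) :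
    g * h ∈ GammaR := by
  rw [mem_GammaR_iff] at *
  exact ⟨mul_mem hg.1 hh.1, by rw [det_mul, hg.2, hh.2, one_mul]⟩

theorem pow_mem_GammaR {g : Matrix (Fin 2) (Fin 2) ℝ} (hg : g ∈ GammaR) (k : ℕ) :
    g ^ k ∈ GammaR := by
  induction k with
  | zero => exact pow_zero g ▸ one_mem_GammaR
  | succ k ih => exact pow_succ g k ▸ mul_mem_GammaR ih hg

theorem inv_mem_GammaR {g : Matrix (Fin 2) (Fin 2) ℝ} (hg : g ∈ GammaR) : g⁻¹ ∈ GammaR := by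
  rw [mem_GammaR_iff] at *
  refine ⟨?_, by rw [det_nonsing_inv, hg.2, Ring.inverse_one]⟩
  rw [inv_def, hg.2, Ring.inverse_one, one_smul]
  exact adjugate_mem_intMatrices hg.1

theorem mapMatrix_intCast_mem_GammaR {M : Matrix (Fin 2) (Fin 2) ℤ} (hM : M.det = 1) :
    (Int.castRingHom ℝ).mapMatrix M ∈ GammaR :=
  mem_GammaR_iff.2 ⟨⟨M, rfl⟩, by rw [← RingHom.map_det, hM, map_one]⟩

theorem exists_pow_conj_mem_GammaR {A : Matrix (Fin 2) (Fin 2) ℝ} (hA : IsUnit A.det)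
    {F : Set (Matrix (Fin 2) (Fin 2) ℝ)} (hF : F.Finite)
    (hcov : ∀ M ∈ doubleCoset A, ∃ g ∈ GammaR, ∃ N ∈ F, M = g * N)
    {γ : Matrix (Fin 2) (Fin 2) ℝ} (hγ : γ ∈ GammaR) :
    ∃ k > 0, A * γ ^ k * A⁻¹ ∈ GammaR := by
  choose g hg N hN hgN using fun k : ℕ =>
    hcov (A * γ ^ k) ⟨1, one_mem_GammaR, γ ^ k, pow_mem_GammaR hγ k, by rw [one_mul]⟩
  obtain ⟨m, n, hmn, hNmn⟩ := hF.exists_lt_map_eq_of_forall_mem hN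
  obtain ⟨k, rfl⟩ := Nat.exists_eq_add_of_lt hmn
  have hgm : IsUnit (g m).det := (mem_GammaR_iff.1 (hg m)).2 ▸ isUnit_one
  have hγm : IsUnit (γ ^ m).det := (mem_GammaR_iff.1 (pow_mem_GammaR hγ m)).2 ▸ isUnit_one
  -- both `A γ^m` and `A γ^(m+k+1)` lie in the coset `Γ N m`
  have hshift : A * γ ^ (k + 1) * γ ^ m = g (m + k + 1) * (g m)⁻¹ * A * γ ^ m := by
    rw [mul_assoc, ← pow_add, add_comm, ← add_assoc, hgN, ← hNmn, mul_assoc _ A, mul_assoc,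
      hgN, ← mul_assoc (g m)⁻¹, nonsing_inv_mul _ hgm, one_mul]
  have hconj : A * γ ^ (k + 1) * A⁻¹ = g (m + k + 1) * (g m)⁻¹ := by
    have := congrArg (· * (γ ^ m)⁻¹ * A⁻¹) hshift
    simpa only [mul_nonsing_inv_cancel_right _ _ hγm, mul_nonsing_inv_cancel_right _ _ hA]
      using this
  exact ⟨k + 1, k.succ_pos, hconj ▸ mul_mem_GammaR (hg _) (inv_mem_GammaR (hg m))⟩

theorem one_add_pow_of_mul_self_eq_zero {R : Type*} [Semiring R] {x : R} (hx : x * x = 0)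
    (k : ℕ) : (1 + x) ^ k = 1 + k * x := by
  induction k with
  | zero => simp
  | succ k ih =>
    rw [pow_succ, ih, mul_add, mul_one, add_mul, one_mul, mul_assoc, hx, mul_zero, add_zero,
      add_assoc, Nat.cast_succ, add_mul, one_mul]

theorem conj_mem_ratMatrices_of_unipotent {A : Matrix (Fin 2) (Fin 2) ℝ} (hA : IsUnit A.det)
    {F : Set (Matrix (Fin 2) (Fin 2) ℝ)} (hF : F.Finite)
    (hcov : ∀ M ∈ doubleCoset A, ∃ g ∈ GammaR, ∃ N ∈ F, M = g * N)
    {E : Matrix (Fin 2) (Fin 2) ℤ} (hE : E * E = 0) (hdet : (1 + E).det = 1) :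
    A * (Int.castRingHom ℝ).mapMatrix E * A⁻¹ ∈ ratMatrices (Fin 2) := by
  set E' := (Int.castRingHom ℝ).mapMatrix E
  have hE' : E' * E' = 0 := by rw [← map_mul, hE, map_zero]
  have hγ : 1 + E' ∈ GammaR := by
    simpa only [map_add, map_one] using mapMatrix_intCast_mem_GammaR hdet
  obtain ⟨k, hk, hG⟩ := exists_pow_conj_mem_GammaR hA hF hcov hγ
  have hconj : A * (1 + E') ^ k * A⁻¹ = 1 + (k : ℚ) • (A * E' * A⁻¹) := by
    rw [one_add_pow_of_mul_self_eq_zero hE', mul_add, add_mul, mul_one, mul_nonsing_inv _ hA,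
      ← nsmul_eq_mul, mul_smul_comm, smul_mul_assoc, Nat.cast_smul_eq_nsmul]
  have hsmul : (k : ℚ) • (A * E' * A⁻¹) ∈ ratMatrices (Fin 2) := by
    simpa [hconj] using sub_mem (mem_ratMatrices_of_mem_intMatrices (mem_GammaR_iff.1 hG).1)
      (one_mem (ratMatrices (Fin 2)))
  exact (Submodule.smul_mem_iff (ratMatrices (Fin 2)).toSubmodule
    (Nat.cast_ne_zero.2 hk.ne')).1 hsmul

theorem single_mem_of_unipotent_mem (S : Submodule ℚ (Matrix (Fin 2) (Fin 2) ℝ)) (h1 : 1 ∈ S)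
    (hS : ∀ E : Matrix (Fin 2) (Fin 2) ℤ, E * E = 0 → (1 + E).det = 1 →
      (Int.castRingHom ℝ).mapMatrix E ∈ S)
    (i j : Fin 2) : single i j 1 ∈ S := by
  have h01 := hS !![0, 1; 0, 0] (by decide) (by decide)
  have h10 := hS !![0, 0; 1, 0] (by decide) (by decide)
  have hE := hS !![1, -1; 1, -1] (by decide) (by decide)
  -- `!![1, -1; 1, -1] + !![0, 1; 0, 0] - !![0, 0; 1, 0] = !![1, 0; 0, -1]`
  have hH := S.sub_mem (S.add_mem hE h01) h10
  fin_cases i <;> fin_cases j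
  · convert S.smul_mem (1 / 2 : ℚ) (S.add_mem h1 hH) using 1
    ext a b; fin_cases a <;> fin_cases b <;> norm_num [Rat.smul_def]
  · convert h01 using 1
    ext a b; fin_cases a <;> fin_cases b <;> simp
  · convert h10 using 1
    ext a b; fin_cases a <;> fin_cases b <;> simp
  · convert S.smul_mem (1 / 2 : ℚ) (S.sub_mem h1 hH) using 1
    ext a b; fin_cases a <;> fin_cases b <;> norm_num [Rat.smul_def]

theorem exists_smul_rat_of_conj_single_mem {n : Type*} [Fintype n] [DecidableEq n] [Nonempty n]
    {A : Matrix n n ℝ} (hA : IsUnit A.det)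
    (h : ∀ i j, A * single i j 1 * A⁻¹ ∈ ratMatrices n) :
    ∃ c : ℝ, c ≠ 0 ∧ ∀ i j, ∃ q : ℚ, c * A i j = q := by
  obtain ⟨j, l, hjl⟩ : ∃ j l, A⁻¹ j l ≠ 0 := by
    by_contra! h0
    have h0 : A⁻¹ = 0 := ext h0
    simpa [h0] using mul_nonsing_inv A hA
  refine ⟨A⁻¹ j l, hjl, fun k i => ?_⟩
  obtain ⟨q, hq⟩ := mem_ratMatrices.1 (h i j) k l
  exact ⟨q, by simpa [mul_apply, single_apply, ite_and, mul_comm] using hq⟩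

/-- If `A ∈ SL(2,ℝ)` is such that the double coset `Γ A Γ` (`Γ = SL(2,ℤ)`) consists of
finitely many left `Γ`-cosets, then some nonzero real multiple of `A` has rational entries. -/
theorem finite_cosets_implies_rational (A : Matrix (Fin 2) (Fin 2) ℝ) (hA : A.det = 1)
    (hfin : ∃ F : Finset (Matrix (Fin 2) (Fin 2) ℝ), ↑F ⊆ doubleCoset A ∧
      ∀ M ∈ doubleCoset A, ∃ γ ∈ GammaR, ∃ N ∈ (F : Set (Matrix (Fin 2) (Fin 2) ℝ)),
        M = γ * N) :
    ∃ c : ℝ, c ≠ 0 ∧ ∀ i j, ∃ q : ℚ, c * A i j = (q : ℝ) := by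
  obtain ⟨F, -, hcov⟩ := hfin
  have hAu : IsUnit A.det := hA ▸ isUnit_one
  let conj : Matrix (Fin 2) (Fin 2) ℝ →ₗ[ℚ] Matrix (Fin 2) (Fin 2) ℝ :=
    LinearMap.mulLeft ℚ A ∘ₗ LinearMap.mulRight ℚ A⁻¹
  have hconj (X : Matrix (Fin 2) (Fin 2) ℝ) : conj X = A * X * A⁻¹ := (mul_assoc _ _ _).symm
  refine exists_smul_rat_of_conj_single_mem hAu fun i j => ?_
  rw [← hconj]
  refine single_mem_of_unipotent_mem ((ratMatrices (Fin 2)).toSubmodule.comap conj) ?_ ?_ i j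
  · simp [hconj, mul_nonsing_inv _ hAu]
  · intro E hE hdet
    simpa [hconj] using conj_mem_ratMatrices_of_unipotent hAu F.finite_toSet hcov hE hdet
end
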